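/- Let h > 0 and k ≥ 1 be real numbers. The Lipschitz constant of the k-expansion map Φ_{k,h} on the horoball B_h (with respect to the hyperbolic metric) is precisely k: Φ_{k,h} satisfies dist(Φ_{k,h}(z), Φ_{k,h}(w)) ≤ k · dist(z, w) for all z, w ∈ B_h, and for every real k' with 0 ≤ k' < k there exist z, w ∈ B_h with dist(Φ_{k,h}(z), Φ_{k,h}(w)) > k' · dist(z, w). -/

import Mathlib

/-!
Write `y, y'` for imaginary parts. The hyperbolic distance splits as
`sinh² (d / 2) = (Δ Re)² / (4 y y') + sinh² (Δ log y / 2)`.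
The map `Φ_{k,h}` keeps `Δ Re`, multiplies `Δ log y` by `k`, and on `B_h` can only increase
`y y'`; since `x ↦ sinh² (k x) - sinh² x` is increasing in `|x|`, this forces the new distance
to be at most `k d`. On a vertical geodesic `Φ_{k,h}` is exactly a `k`-homothety, so `k` is sharp.
-/

open UpperHalfPlane Real

/-- The `k`-expansion map `Φ_{k,h}` of the horoball `B_h = {z ∈ ℍ : h ≤ Im z}`:
`Φ_{k,h}(z) = Re z + i·h·(Im z / h)^k`. -/
noncomputable def expMap (k h : ℝ) (hh : 0 < h) (z : UpperHalfPlane) : UpperHalfPlane :=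
  ⟨⟨z.re, h * (z.im / h) ^ k⟩, by
    simpa using mul_pos hh (Real.rpow_pos_of_pos (div_pos z.im_pos hh) k)⟩

namespace Real

theorem sinh_sq_sub_sinh_sq (a b : ℝ) :
    sinh a ^ 2 - sinh b ^ 2 = sinh (a + b) * sinh (a - b) := by
  rw [sinh_add, sinh_sub]
  linear_combination (-sinh a ^ 2) * cosh_sq' b + sinh b ^ 2 * cosh_sq' a

theorem sinh_sq_abs (x : ℝ) : sinh |x| ^ 2 = sinh x ^ 2 := by
  rw [← abs_sinh, sq_abs]

theorem sinh_sq_le_sinh_sq {x y : ℝ} : sinh x ^ 2 ≤ sinh y ^ 2 ↔ |x| ≤ |y| := by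
  rw [sq_le_sq, abs_sinh, abs_sinh, sinh_le_sinh]

theorem sinh_sq_sub_sinh_sq_le_sinh_sq_mul_sub {k s t : ℝ} (hk : 1 ≤ k) (hst : |s| ≤ |t|) :
    sinh t ^ 2 - sinh s ^ 2 ≤ sinh (k * t) ^ 2 - sinh (k * s) ^ 2 := by
  have habs : ∀ x, sinh (k * x) ^ 2 = sinh (k * |x|) ^ 2 := fun x => by
    rw [← sinh_sq_abs (k * x), abs_mul, abs_of_nonneg (by linarith)]
  rw [habs t, habs s, ← sinh_sq_abs t, ← sinh_sq_abs s, sinh_sq_sub_sinh_sq,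
    sinh_sq_sub_sinh_sq, ← mul_add, ← mul_sub]
  have hsum : 0 ≤ |t| + |s| := by positivity
  have hdiff : 0 ≤ |t| - |s| := by linarith
  exact mul_le_mul (sinh_le_sinh.2 (le_mul_of_one_le_left hsum hk))
    (sinh_le_sinh.2 (le_mul_of_one_le_left hdiff hk)) (sinh_nonneg_iff.2 hdiff)
    (sinh_nonneg_iff.2 (by positivity))

theorem abs_le_mul_abs_of_sinh_sq {k a s t T : ℝ} (hk : 1 ≤ k) (ha : 0 ≤ a)
    (ht : sinh t ^ 2 = a + sinh s ^ 2) (hT : sinh T ^ 2 ≤ a + sinh (k * s) ^ 2) :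
    |T| ≤ k * |t| := by
  have hst : |s| ≤ |t| := sinh_sq_le_sinh_sq.1 (by linarith)
  have hgrowth := sinh_sq_sub_sinh_sq_le_sinh_sq_mul_sub hk hst
  have hTkt : |T| ≤ |k * t| := sinh_sq_le_sinh_sq.1 (by linarith)
  rwa [abs_mul, abs_of_nonneg (by linarith : (0 : ℝ) ≤ k)] at hTkt

theorem sinh_sq_half_log_sub_log {x y : ℝ} (hx : 0 < x) (hy : 0 < y) :
    sinh ((log x - log y) / 2) ^ 2 = (x - y) ^ 2 / (4 * x * y) := by
  have hcosh : cosh (log x - log y) = (x / y + y / x) / 2 := by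
    rw [← log_div hx.ne' hy.ne', cosh_log (by positivity), inv_div]
  have hdouble := cosh_two_mul ((log x - log y) / 2)
  rw [mul_div_cancel₀ _ two_ne_zero, cosh_sq'] at hdouble
  rw [show sinh ((log x - log y) / 2) ^ 2 = (cosh (log x - log y) - 1) / 2 by linarith, hcosh]
  field_simp
  ring

end Real

namespace UpperHalfPlane

theorem sinh_sq_half_dist (z w : ℍ) :
    sinh (dist z w / 2) ^ 2 =
      (z.re - w.re) ^ 2 / (4 * z.im * w.im) + sinh ((log z.im - log w.im) / 2) ^ 2 := by
  rw [sinh_half_dist, sinh_sq_half_log_sub_log z.im_pos w.im_pos, div_pow, mul_pow,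
    sq_sqrt (by positivity), Complex.dist_eq_re_im, sq_sqrt (by positivity), coe_re, coe_re,
    coe_im, coe_im]
  ring

end UpperHalfPlane

section expMap

variable {k h : ℝ} {hh : 0 < h}

@[simp]
theorem expMap_re (z : ℍ) : (expMap k h hh z).re = z.re := rfl

theorem expMap_im (z : ℍ) : (expMap k h hh z).im = h * (z.im / h) ^ k := rfl

theorem log_expMap_im (z : ℍ) :
    log (expMap k h hh z).im = log h + k * (log z.im - log h) := by
  rw [expMap_im, log_mul hh.ne' (rpow_pos_of_pos (div_pos z.im_pos hh) k).ne',
    log_rpow (div_pos z.im_pos hh), log_div z.im_ne_zero hh.ne']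

theorem log_expMap_im_sub_log_expMap_im (z w : ℍ) :
    log (expMap k h hh z).im - log (expMap k h hh w).im = k * (log z.im - log w.im) := by
  rw [log_expMap_im, log_expMap_im]
  ring

theorem im_le_expMap_im (hk : 1 ≤ k) {z : ℍ} (hz : h ≤ z.im) : z.im ≤ (expMap k h hh z).im :=
  calc z.im = h * (z.im / h) := by field_simp
    _ ≤ h * (z.im / h) ^ k :=
      mul_le_mul_of_nonneg_left (self_le_rpow_of_one_le ((one_le_div hh).2 hz) hk) hh.le

theorem dist_expMap_le (hk : 1 ≤ k) {z w : ℍ} (hz : h ≤ z.im) (hw : h ≤ w.im) :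
    dist (expMap k h hh z) (expMap k h hh w) ≤ k * dist z w := by
  have hD : sinh (dist (expMap k h hh z) (expMap k h hh w) / 2) ^ 2 ≤
      (z.re - w.re) ^ 2 / (4 * z.im * w.im) + sinh (k * ((log z.im - log w.im) / 2)) ^ 2 := by
    rw [sinh_sq_half_dist, expMap_re, expMap_re, log_expMap_im_sub_log_expMap_im, mul_div_assoc]
    gcongr
    · exact im_le_expMap_im hk hz
    · exact im_le_expMap_im hk hw
  have := abs_le_mul_abs_of_sinh_sq hk (by positivity) (sinh_sq_half_dist z w) hD
  rw [abs_of_nonneg (by positivity), abs_of_nonneg (by positivity)] at this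
  linarith

theorem dist_expMap_of_re_eq (hk : 0 ≤ k) {z w : ℍ} (hre : z.re = w.re) :
    dist (expMap k h hh z) (expMap k h hh w) = k * dist z w := by
  rw [dist_of_re_eq hre, dist_of_re_eq (by simpa using hre), Real.dist_eq, Real.dist_eq,
    log_expMap_im_sub_log_expMap_im, abs_mul, abs_of_nonneg hk]

end expMap

/-- For `h > 0` and `k ≥ 1`, the optimal Lipschitz constant of the `k`-expansion map on the
horoball `B_h` (with the hyperbolic metric) is precisely `k`: it is `k`-Lipschitz on `B_h`,
and for every `0 ≤ k' < k` there are points of `B_h` whose image distance exceeds `k'` times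
their distance. -/
theorem expMap_lipschitz_constant_eq (h k : ℝ) (hh : 0 < h) (hk : 1 ≤ k) :
    (∀ z w : UpperHalfPlane, h ≤ z.im → h ≤ w.im →
      dist (expMap k h hh z) (expMap k h hh w) ≤ k * dist z w) ∧
    (∀ k' : ℝ, 0 ≤ k' → k' < k →
      ∃ z w : UpperHalfPlane, h ≤ z.im ∧ h ≤ w.im ∧
        k' * dist z w < dist (expMap k h hh z) (expMap k h hh w)) := by
  refine ⟨fun z w hz hw => dist_expMap_le hk hz hw, fun k' _ hk' => ?_⟩
  let z : ℍ := mk ⟨0, h⟩ hh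
  let w : ℍ := mk ⟨0, 2 * h⟩ (by simp; positivity)
  have hzw : z ≠ w := fun hzw => by
    have := congrArg UpperHalfPlane.im hzw
    simp [z, w] at this
    linarith
  refine ⟨z, w, le_rfl, by simp [w]; linarith, ?_⟩
  rw [dist_expMap_of_re_eq (by linarith) (show z.re = w.re from rfl)]
  exact mul_lt_mul_of_pos_right hk' (dist_pos.2 hzw)
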